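/- arXiv:2501.13462 — 6 statements merged into one kernel-verified Lean document; each statement's English description precedes it below -/
import Mathlib

section
/- Let G be an ℓ-partite graph as above and let Sⱼ ⊆ Vⱼ, |Sⱼ| = a, for all j. Suppose every vertex of S₁ has at least d neighbors in S₂ ∪ ... ∪ S_ℓ. Then the number of edges between V₁ \ S₁ and (V₂ \ S₂) ∪ ... ∪ (V_ℓ \ S_ℓ) is at least (ℓ−1)mn − 2(ℓ−1)an + da. -/
/-- In an `ℓ`-partite graph as in the paper, with `|Sⱼ| = a` for all `j` and every
vertex of `S₁` having at least `d` neighbors in `S₂ ∪ ⋯ ∪ S_ℓ`, the number of edges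
between `V₁ \ S₁` and `(V₂ \ S₂) ∪ ⋯ ∪ (V_ℓ \ S_ℓ)` is at least
`(ℓ-1)mn - 2(ℓ-1)an + da` (stated over ℤ). -/
theorem stmt7 {V : Type} [Fintype V] [DecidableEq V]
    (G : SimpleGraph V) [DecidableRel G.Adj] (ℓ m n : ℕ) [NeZero ℓ]
    (P : Fin ℓ → Finset V)
    (hpart : ∀ v : V, ∃! i, v ∈ P i)
    (hm : ∀ i, (P i).card = m)
    (hnoedge : ∀ i, ∀ u ∈ P i, ∀ v ∈ P i, ¬ G.Adj u v)
    (hdeg : ∀ i j, i ≠ j → ∀ v ∈ P i, ((P j).filter (G.Adj v)).card = n)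
    (S : Fin ℓ → Finset V) (hS : ∀ i, S i ⊆ P i) (a d : ℕ)
    (ha : ∀ j, (S j).card = a)
    (hd : ∀ u ∈ S 0, d ≤
      (((Finset.univ.filter (fun j : Fin ℓ => j ≠ 0)).biUnion S).filter (G.Adj u)).card) :
    ((ℓ : ℤ) - 1) * m * n - 2 * ((ℓ : ℤ) - 1) * a * n + d * a ≤
      ∑ u ∈ P 0 \ S 0,
        ((((Finset.univ.filter (fun j : Fin ℓ => j ≠ 0)).biUnion
            (fun j => P j \ S j)).filter (G.Adj u)).card : ℤ) := by
  classical
  set I : Finset (Fin ℓ) := Finset.univ.filter (fun j : Fin ℓ => j ≠ 0) with hI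
  set D : Fin ℓ → Finset V := fun j => P j \ S j with hD
  have hdisj : ∀ i j : Fin ℓ, i ≠ j → Disjoint (P i) (P j) := by
    intro i j hij
    rw [Finset.disjoint_left]
    intro v hvi hvj
    obtain ⟨k, hk, huniq⟩ := hpart v
    exact hij ((huniq i hvi).trans (huniq j hvj).symm)
  have hℓ1 : 1 ≤ ℓ := Nat.one_le_iff_ne_zero.mpr (NeZero.ne ℓ)
  have hIcard : I.card = ℓ - 1 := by
    have h1 : I = Finset.univ \ {0} := by
      ext j; simp [hI]
    rw [h1, Finset.card_sdiff_of_subset (by simp)]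
    simp
  have ham : a ≤ m := by
    have := Finset.card_le_card (hS 0)
    rwa [ha 0, hm 0] at this
  have hDdisj : ∀ i ∈ I, ∀ j ∈ I, i ≠ j → Disjoint (D i) (D j) := by
    intro i _ j _ hij
    exact (hdisj i j hij).mono Finset.sdiff_subset Finset.sdiff_subset
  have hBcard : (I.biUnion D).card = (ℓ - 1) * (m - a) := by
    rw [Finset.card_biUnion hDdisj]
    rw [Finset.sum_congr rfl (fun j _ => by
      show (D j).card = m - a
      rw [hD]; simp only
      rw [Finset.card_sdiff_of_subset (hS j), hm, ha])]
    rw [Finset.sum_const, hIcard, smul_eq_mul]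
  -- total degree of u ∈ P 0 into the other parts
  have hdegP : ∀ u ∈ P 0, ((I.biUnion P).filter (G.Adj u)).card = (ℓ - 1) * n := by
    intro u hu
    rw [Finset.filter_biUnion, Finset.card_biUnion (fun i hi j hj hij =>
      (hdisj i j hij).mono (Finset.filter_subset _ _) (Finset.filter_subset _ _))]
    rw [Finset.sum_congr rfl (fun j hj => by
      have hj0 : j ≠ 0 := by simpa [hI] using hj
      exact hdeg 0 j (Ne.symm hj0) u hu)]
    rw [Finset.sum_const, hIcard, smul_eq_mul]
  -- split into D-part and S-part
  have hsplit : ∀ u, ((I.biUnion P).filter (G.Adj u)).card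
      = ((I.biUnion D).filter (G.Adj u)).card + ((I.biUnion S).filter (G.Adj u)).card := by
    intro u
    have hunion : I.biUnion P = (I.biUnion D) ∪ (I.biUnion S) := by
      ext v
      simp only [Finset.mem_biUnion, Finset.mem_union, hD, Finset.mem_sdiff]
      constructor
      · rintro ⟨j, hj, hv⟩
        by_cases h : v ∈ S j
        · exact Or.inr ⟨j, hj, h⟩
        · exact Or.inl ⟨j, hj, hv, h⟩
      · rintro (⟨j, hj, hv, _⟩ | ⟨j, hj, hv⟩)
        · exact ⟨j, hj, hv⟩
        · exact ⟨j, hj, hS j hv⟩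
    have hdisjDS : Disjoint (I.biUnion D) (I.biUnion S) := by
      rw [Finset.disjoint_left]
      intro v hvD hvS
      simp only [Finset.mem_biUnion, hD, Finset.mem_sdiff] at hvD hvS
      obtain ⟨i, hi, hvi, hvSi⟩ := hvD
      obtain ⟨j, hj, hvj⟩ := hvS
      by_cases h : i = j
      · exact hvSi (h ▸ hvj)
      · exact Finset.disjoint_left.mp (hdisj i j h) hvi (hS j hvj)
    rw [hunion, Finset.filter_union, Finset.card_union_of_disjoint
      (hdisjDS.mono (Finset.filter_subset _ _) (Finset.filter_subset _ _))]
  -- double counting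
  have hdouble : ∑ u ∈ P 0, ((I.biUnion D).filter (G.Adj u)).card
      = ∑ v ∈ I.biUnion D, ((P 0).filter (G.Adj v)).card := by
    simp only [Finset.card_filter]
    rw [Finset.sum_comm]
    exact Finset.sum_congr rfl fun v _ => Finset.sum_congr rfl fun u _ =>
      if_congr (G.adj_comm u v) rfl rfl
  have hsumP0 : ∑ u ∈ P 0, ((I.biUnion D).filter (G.Adj u)).card
      = (ℓ - 1) * (m - a) * n := by
    rw [hdouble, Finset.sum_congr rfl (fun v hv => by
      simp only [Finset.mem_biUnion, hD, Finset.mem_sdiff] at hv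
      obtain ⟨j, hj, hvj, -⟩ := hv
      have hj0 : j ≠ 0 := by simpa [hI] using hj
      exact hdeg j 0 hj0 v hvj), Finset.sum_const, hBcard, smul_eq_mul]
  -- bound for u ∈ S 0
  have hS0bound : ∀ u ∈ S 0,
      (((I.biUnion D).filter (G.Adj u)).card : ℤ) ≤ ((ℓ : ℤ) - 1) * n - d := by
    intro u hu
    have h1 := hsplit u
    rw [hdegP u (hS 0 hu)] at h1
    have h2 := hd u hu
    have hcast : (((I.biUnion D).filter (G.Adj u)).card : ℤ)
        + (((I.biUnion S).filter (G.Adj u)).card : ℤ) = ((ℓ - 1 : ℕ) : ℤ) * n := by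
      exact_mod_cast h1.symm
    rw [Nat.cast_sub hℓ1] at hcast
    have h2' : (d : ℤ) ≤ (((I.biUnion S).filter (G.Adj u)).card : ℤ) := by exact_mod_cast h2
    push_cast at hcast ⊢
    linarith
  -- assemble
  have hsub : ∑ u ∈ P 0 \ S 0, (((I.biUnion D).filter (G.Adj u)).card : ℤ)
      = ∑ u ∈ P 0, (((I.biUnion D).filter (G.Adj u)).card : ℤ)
        - ∑ u ∈ S 0, (((I.biUnion D).filter (G.Adj u)).card : ℤ) := by
    rw [eq_sub_iff_add_eq, Finset.sum_sdiff (hS 0)]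
  have hsumP0' : ∑ u ∈ P 0, (((I.biUnion D).filter (G.Adj u)).card : ℤ)
      = ((ℓ : ℤ) - 1) * ((m : ℤ) - a) * n := by
    have := hsumP0
    have : (∑ u ∈ P 0, (((I.biUnion D).filter (G.Adj u)).card : ℤ))
        = (((ℓ - 1) * (m - a) * n : ℕ) : ℤ) := by exact_mod_cast congrArg (Nat.cast : ℕ → ℤ) this
    rw [this, Nat.cast_mul, Nat.cast_mul, Nat.cast_sub hℓ1, Nat.cast_sub ham]
    push_cast
    ring
  have hsumS0 : ∑ u ∈ S 0, (((I.biUnion D).filter (G.Adj u)).card : ℤ)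
      ≤ (a : ℤ) * (((ℓ : ℤ) - 1) * n - d) := by
    calc ∑ u ∈ S 0, (((I.biUnion D).filter (G.Adj u)).card : ℤ)
        ≤ ∑ _u ∈ S 0, (((ℓ : ℤ) - 1) * n - d) := Finset.sum_le_sum hS0bound
      _ = (a : ℤ) * (((ℓ : ℤ) - 1) * n - d) := by
          rw [Finset.sum_const, ha 0, nsmul_eq_mul]
  rw [hsub, hsumP0']
  linarith
end

section
/- Let G be an ℓ-partite graph as above with adjacency matrix A and second largest eigenvalue λ₂. Let Sⱼ ⊆ Vⱼ with |Sⱼ| = a for all j, and suppose that for every i and every u ∈ Sᵢ, u has at least d neighbors in ⋃_{j≠i} Sⱼ, with a ≥ 1. Then a ≥ m(d − λ₂)/((ℓ−1)n − λ₂). -/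
/-!
Let `x` be the indicator vector of `T = ⋃ Sⱼ`, so `|T| = ℓa` among `N = ℓm` vertices, and the
degree hypothesis gives `xᵀAx ≥ ℓa·d`. The graph is `k`-regular with `k = (ℓ-1)n`, so `𝟙` is an
eigenvector for `k > λ₂`, hence spans the top eigenline, and every `y ⊥ 𝟙` satisfies
`yᵀAy ≤ λ₂‖y‖²`. Writing `x = (a/m)𝟙 + y` yields `xᵀAx ≤ ℓa·(k·a/m + λ₂(1 - a/m))`, so
`d ≤ λ₂ + (a/m)(k - λ₂)`.
-/

open Finset Function Matrix

namespace Matrix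

variable {V : Type*} [Fintype V]

theorem IsSymm.dotProduct_mulVec_comm {R : Type*} [CommSemiring R] {A : Matrix V V R}
    (hA : A.IsSymm) (x y : V → R) : x ⬝ᵥ A *ᵥ y = A *ᵥ x ⬝ᵥ y := by
  rw [dotProduct_mulVec, ← mulVec_transpose, hA.eq]

theorem _root_.OrthonormalBasis.dotProduct_eq_sum {ι : Type*} [Fintype ι]
    (b : OrthonormalBasis ι ℝ (EuclideanSpace ℝ V)) (x y : V → ℝ) :
    x ⬝ᵥ y = ∑ i, (x ⬝ᵥ b i) * (b i ⬝ᵥ y) := by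
  simpa [EuclideanSpace.inner_eq_star_dotProduct, dotProduct_comm] using
    (b.sum_inner_mul_inner (WithLp.toLp 2 x) (WithLp.toLp 2 y)).symm

namespace IsHermitian

variable [DecidableEq V] {A : Matrix V V ℝ} (hA : A.IsHermitian)

theorem eigenvectorBasis_dotProduct_mulVec (i : V) (y : V → ℝ) :
    hA.eigenvectorBasis i ⬝ᵥ A *ᵥ y = hA.eigenvalues i * (hA.eigenvectorBasis i ⬝ᵥ y) := by
  rw [(isHermitian_iff_isSymm.mp hA).dotProduct_mulVec_comm, hA.mulVec_eigenvectorBasis,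
    smul_dotProduct, smul_eq_mul]

theorem dotProduct_mulVec_eq_sum (y : V → ℝ) :
    y ⬝ᵥ A *ᵥ y = ∑ i, hA.eigenvalues i * (hA.eigenvectorBasis i ⬝ᵥ y) ^ 2 := by
  rw [hA.eigenvectorBasis.dotProduct_eq_sum]
  refine sum_congr rfl fun i _ => ?_
  rw [hA.eigenvectorBasis_dotProduct_mulVec, dotProduct_comm y]
  ring

variable {e : Fin (Fintype.card V) ≃ V} (hV : 2 ≤ Fintype.card V)

theorem eigenvalues_le_second_of_ne (hmono : Antitone (hA.eigenvalues ∘ e)) {i : V}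
    (hi : i ≠ e ⟨0, by omega⟩) :
    hA.eigenvalues i ≤ hA.eigenvalues (e ⟨1, by omega⟩) := by
  have h : (⟨1, by omega⟩ : Fin (Fintype.card V)) ≤ e.symm i := by
    rw [Fin.le_def, Nat.one_le_iff_ne_zero]
    exact fun h0 => hi (by rw [← e.apply_symm_apply i]; exact congrArg e (Fin.ext h0))
  simpa using hmono h

theorem dotProduct_mulVec_le_of_dotProduct_eq_zero (hmono : Antitone (hA.eigenvalues ∘ e))
    {k : ℝ} {o : V → ℝ} (ho : A *ᵥ o = k • o) (ho0 : o ≠ 0)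
    (hk : hA.eigenvalues (e ⟨1, by omega⟩) < k) {y : V → ℝ} (hy : o ⬝ᵥ y = 0) :
    y ⬝ᵥ A *ᵥ y ≤ hA.eigenvalues (e ⟨1, by omega⟩) * (y ⬝ᵥ y) := by
  set b := hA.eigenvectorBasis
  set i₀ := e ⟨0, by omega⟩
  -- `k` differs from every eigenvalue but the top one, so `o` is a multiple of `b i₀`.
  have hbo : ∀ i ≠ i₀, b i ⬝ᵥ o = 0 := by
    intro i hi
    have h := hA.eigenvectorBasis_dotProduct_mulVec i o
    rw [ho, dotProduct_smul, smul_eq_mul] at h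
    have hlt := (hA.eigenvalues_le_second_of_ne hV hmono hi).trans_lt hk
    exact (mul_eq_mul_right_iff.mp h).resolve_left hlt.ne'
  have hsum : ∀ x : V → ℝ, o ⬝ᵥ x = (o ⬝ᵥ b i₀) * (b i₀ ⬝ᵥ x) := by
    intro x
    rw [b.dotProduct_eq_sum, sum_eq_single i₀ (fun i _ hi => by
      rw [dotProduct_comm, hbo i hi, zero_mul]) (by simp)]
  have hbo₀ : o ⬝ᵥ b i₀ ≠ 0 := by
    intro h
    apply ho0
    simpa [h] using hsum o
  have hby : b i₀ ⬝ᵥ y = 0 := by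
    simpa [hbo₀] using (hsum y).symm.trans hy
  rw [hA.dotProduct_mulVec_eq_sum, b.dotProduct_eq_sum, mul_sum]
  refine sum_le_sum fun i _ => ?_
  rw [dotProduct_comm y, ← sq]
  by_cases hi : i = i₀
  · simp only [b] at hby ⊢
    simp [hi, hby]
  · exact mul_le_mul_of_nonneg_right (hA.eigenvalues_le_second_of_ne hV hmono hi) (sq_nonneg _)

theorem dotProduct_mulVec_le_of_mulVec_one (hmono : Antitone (hA.eigenvalues ∘ e)) {k : ℝ}
    (h1 : A *ᵥ 1 = k • 1) (hk : hA.eigenvalues (e ⟨1, by omega⟩) < k) (x : V → ℝ) :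
    x ⬝ᵥ A *ᵥ x ≤ k * (∑ v, x v) ^ 2 / Fintype.card V +
      hA.eigenvalues (e ⟨1, by omega⟩) * (x ⬝ᵥ x - (∑ v, x v) ^ 2 / Fintype.card V) := by
  set N : ℝ := (Fintype.card V : ℝ)
  set s := ∑ v, x v
  have hN : N ≠ 0 := by positivity
  set y := x - (s / N) • 1
  have hx : x = (s / N) • 1 + y := by simp [y]
  have h1x : (1 : V → ℝ) ⬝ᵥ x = s := one_dotProduct x
  have h11 : (1 : V → ℝ) ⬝ᵥ 1 = N := one_dotProduct_one
  have h1y : (1 : V → ℝ) ⬝ᵥ y = 0 := by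
    simp only [y, dotProduct_sub, dotProduct_smul, h1x, h11, smul_eq_mul]
    field_simp
    ring
  have hy1 : y ⬝ᵥ 1 = 0 := by rw [dotProduct_comm, h1y]
  have h1Ay : (1 : V → ℝ) ⬝ᵥ A *ᵥ y = 0 := by
    rw [(isHermitian_iff_isSymm.mp hA).dotProduct_mulVec_comm, h1, smul_dotProduct, h1y,
      smul_zero]
  have hyy : y ⬝ᵥ y = x ⬝ᵥ x - s ^ 2 / N := by
    simp only [y, dotProduct_sub, sub_dotProduct, dotProduct_smul, smul_dotProduct, h1x, h11,
      dotProduct_comm x 1, smul_eq_mul]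
    field_simp
    ring
  have : Nonempty V := Fintype.card_pos_iff.mp (by omega)
  have hyAy := hA.dotProduct_mulVec_le_of_dotProduct_eq_zero hV hmono h1 one_ne_zero hk h1y
  have hxAx : x ⬝ᵥ A *ᵥ x = k * s ^ 2 / N + y ⬝ᵥ A *ᵥ y := by
    rw [hx, mulVec_add, mulVec_smul]
    simp only [dotProduct_add, add_dotProduct, dotProduct_smul, smul_dotProduct, h1Ay, hy1,
      h1, h11, smul_eq_mul]
    field_simp
    ring
  rw [hxAx, ← hyy]
  linarith

end IsHermitian
end Matrix

theorem pairwise_disjoint_of_existsUnique_mem {ι α : Type*} {P : ι → Finset α}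
    (hP : ∀ v, ∃! i, v ∈ P i) : Pairwise (Disjoint on P) := fun _ _ hij =>
  disjoint_left.mpr fun v hi hj => hij ((hP v).unique hi hj)

theorem biUnion_univ_eq_univ_of_existsUnique_mem {ι α : Type*} [Fintype ι] [Fintype α]
    [DecidableEq α] {P : ι → Finset α} (hP : ∀ v, ∃! i, v ∈ P i) : univ.biUnion P = univ :=
  eq_univ_of_forall fun v => mem_biUnion.mpr ((hP v).exists.imp fun i hi => ⟨mem_univ i, hi⟩)

namespace SimpleGraph

variable {V : Type*} [Fintype V] [DecidableEq V] (G : SimpleGraph V) [DecidableRel G.Adj]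

theorem isRegularOfDegree_of_existsUnique_mem {ι : Type*} [Fintype ι] [DecidableEq ι]
    {P : ι → Finset V} {n : ℕ} (hP : ∀ v, ∃! i, v ∈ P i)
    (hindep : ∀ i, ∀ u ∈ P i, ∀ v ∈ P i, ¬ G.Adj u v)
    (hdeg : ∀ i j, i ≠ j → ∀ v ∈ P i, #{u ∈ P j | G.Adj v u} = n) :
    G.IsRegularOfDegree ((Fintype.card ι - 1) * n) := by
  intro v
  obtain ⟨i, hvi, -⟩ := hP v
  have hnbr : G.neighborFinset v = univ.biUnion fun j => {u ∈ P j | G.Adj v u} := by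
    rw [← filter_biUnion, biUnion_univ_eq_univ_of_existsUnique_mem hP, neighborFinset_eq_filter]
  have hcard : ∀ j, #{u ∈ P j | G.Adj v u} = if j = i then 0 else n := by
    intro j
    split_ifs with hji
    · subst hji
      exact card_eq_zero.mpr (filter_eq_empty_iff.mpr fun u hu => hindep j v hvi u hu)
    · exact hdeg i j (Ne.symm hji) v hvi
  rw [← card_neighborFinset_eq_degree, hnbr,
    card_biUnion fun _ _ _ _ hjk => ((pairwise_disjoint_of_existsUnique_mem hP) hjk).mono
      (filter_subset _ _) (filter_subset _ _)]
  simp [hcard, sum_ite, card_univ, filter_ne']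

theorem dotProduct_adjMatrix_mulVec_indicator (T : Finset V) :
    (fun v => if v ∈ T then (1 : ℝ) else 0) ⬝ᵥ
        G.adjMatrix ℝ *ᵥ (fun v => if v ∈ T then (1 : ℝ) else 0) =
      ∑ v ∈ T, (#{u ∈ T | G.Adj v u} : ℝ) := by
  simp [dotProduct, adjMatrix_mulVec_apply, neighborFinset_eq_filter, filter_inter]

theorem sum_card_filter_adj_le {k : ℕ} (hreg : G.IsRegularOfDegree k)
    (hA : (G.adjMatrix ℝ).IsHermitian) (hV : 2 ≤ Fintype.card V) {e : Fin (Fintype.card V) ≃ V}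
    (hmono : Antitone (hA.eigenvalues ∘ e)) (hk : hA.eigenvalues (e ⟨1, by omega⟩) < k)
    (T : Finset V) :
    ∑ v ∈ T, (#{u ∈ T | G.Adj v u} : ℝ) ≤
      #T * (k * (#T / Fintype.card V) +
        hA.eigenvalues (e ⟨1, by omega⟩) * (1 - #T / Fintype.card V)) := by
  have h1 : G.adjMatrix ℝ *ᵥ 1 = (k : ℝ) • 1 := by
    ext v
    simpa using adjMatrix_mulVec_const_apply_of_regular hreg (a := (1 : ℝ)) (v := v)
  have h := hA.dotProduct_mulVec_le_of_mulVec_one hV hmono h1 hk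
    (fun v => if v ∈ T then (1 : ℝ) else 0)
  rw [dotProduct_adjMatrix_mulVec_indicator] at h
  simp only [dotProduct, sum_boole, mul_ite, mul_one, mul_zero] at h
  convert h using 1
  simp only [subset_univ, filter_mem_eq_of_subset, sum_ite_mem, univ_inter, inter_self,
    sum_const, nsmul_eq_mul, mul_one]
  ring

end SimpleGraph

/-- In an `ℓ`-partite graph as in the paper (so `(ℓ-1)n`-regular), with second largest
adjacency eigenvalue `λ₂ < (ℓ-1)n`, if `Sⱼ ⊆ Vⱼ` with `|Sⱼ| = a ≥ 1` for all `j` and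
every vertex of each `Sᵢ` has at least `d` neighbors in `⋃_{j≠i} Sⱼ`, then
`a ≥ m(d - λ₂)/((ℓ-1)n - λ₂)`. -/
theorem stmt8 {V : Type} [Fintype V] [DecidableEq V]
    (G : SimpleGraph V) [DecidableRel G.Adj] (ℓ m n : ℕ) (hℓ : 1 ≤ ℓ)
    (P : Fin ℓ → Finset V)
    (hpart : ∀ v : V, ∃! i, v ∈ P i)
    (hm : ∀ i, (P i).card = m)
    (hnoedge : ∀ i, ∀ u ∈ P i, ∀ v ∈ P i, ¬ G.Adj u v)
    (hdeg : ∀ i j, i ≠ j → ∀ v ∈ P i, ((P j).filter (G.Adj v)).card = n)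
    (hA : (G.adjMatrix ℝ).IsHermitian)
    (hcard : 2 ≤ Fintype.card V)
    (e : Fin (Fintype.card V) ≃ V) (hmono : Antitone (hA.eigenvalues ∘ e))
    (hgap : hA.eigenvalues (e ⟨1, by omega⟩) < ((ℓ : ℝ) - 1) * n)
    (S : Fin ℓ → Finset V) (hS : ∀ i, S i ⊆ P i) (a d : ℕ)
    (ha : ∀ j, (S j).card = a) (ha1 : 1 ≤ a)
    (hd : ∀ i : Fin ℓ, ∀ u ∈ S i, d ≤
      (((Finset.univ.filter (fun j : Fin ℓ => j ≠ i)).biUnion S).filter (G.Adj u)).card) :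
    (m : ℝ) * ((d : ℝ) - hA.eigenvalues (e ⟨1, by omega⟩)) /
        (((ℓ : ℝ) - 1) * n - hA.eigenvalues (e ⟨1, by omega⟩)) ≤ a := by
  set μ := hA.eigenvalues (e ⟨1, by omega⟩)
  set T := univ.biUnion S
  have hPdisj := pairwise_disjoint_of_existsUnique_mem hpart
  have hT : #T = ℓ * a := by
    rw [card_biUnion fun i _ j _ hij => (hPdisj hij).mono (hS i) (hS j)]
    simp [ha]
  have hV : Fintype.card V = ℓ * m := by
    rw [← card_univ, ← biUnion_univ_eq_univ_of_existsUnique_mem hpart,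
      card_biUnion fun i _ j _ hij => hPdisj hij]
    simp [hm]
  have hreg := G.isRegularOfDegree_of_existsUnique_mem hpart hnoedge hdeg
  rw [Fintype.card_fin] at hreg
  have hk : (((ℓ - 1) * n : ℕ) : ℝ) = ((ℓ : ℝ) - 1) * n := by push_cast [hℓ]; ring
  have hup := G.sum_card_filter_adj_le hreg hA hcard hmono (hk ▸ hgap) T
  have hlow : #T * d ≤ ∑ v ∈ T, #{u ∈ T | G.Adj v u} := by
    refine card_nsmul_le_sum _ _ _ fun v hv => ?_
    obtain ⟨i, -, hvi⟩ := mem_biUnion.mp hv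
    exact (hd i v hvi).trans (card_le_card (filter_subset_filter _
      (biUnion_subset_biUnion_of_subset_left _ (subset_univ _))))
  have ham : a ≤ m := by simpa [ha, hm] using card_le_card (hS ⟨0, by omega⟩)
  have hm0 : (0 : ℝ) < m := by exact_mod_cast ha1.trans ham
  have hratio : (#T : ℝ) / Fintype.card V = a / m := by
    rw [hT, hV]; push_cast; field_simp
  have hd_le : (d : ℝ) ≤ ((ℓ : ℝ) - 1) * n * (a / m) + μ * (1 - a / m) := by
    rw [hk, hratio] at hup
    refine le_of_mul_le_mul_left ((?_ : (#T * d : ℝ) ≤ _).trans hup) (by rw [hT]; positivity)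
    exact_mod_cast hlow
  rw [div_le_iff₀ (sub_pos.mpr hgap)]
  field_simp at hd_le
  linarith
end

section
/- Let 𝒞 be the generalized graph code on the complete tripartite graph K_{3,3,3} with base code C = {c ∈ 𝔽₂⁶ : wt(c) is even} at every vertex. Then the minimum distance of 𝒞 is exactly 3. -/
/-- The generalized graph code on `K_{3,3,3}` with the even-weight `[6,5,2]` code at
every vertex has minimum distance exactly 3: every nonzero codeword (edge-labeling
such that each vertex sees an even number of 1's) has weight at least 3, and some
codeword has weight exactly 3. -/
theorem stmt13 (G : SimpleGraph (Fin 3 × Fin 3)) [DecidableRel G.Adj]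
    (hG : ∀ u v, G.Adj u v ↔ u.1 ≠ v.1) :
    (∀ c : Sym2 (Fin 3 × Fin 3) → ZMod 2,
      (∀ v, (G.edgeFinset.filter (fun e => v ∈ e ∧ c e ≠ 0)).card % 2 = 0) →
      (∃ e ∈ G.edgeFinset, c e ≠ 0) →
      3 ≤ (G.edgeFinset.filter (fun e => c e ≠ 0)).card) ∧
    (∃ c : Sym2 (Fin 3 × Fin 3) → ZMod 2,
      (∀ e ∉ G.edgeFinset, c e = 0) ∧
      (∀ v, (G.edgeFinset.filter (fun e => v ∈ e ∧ c e ≠ 0)).card % 2 = 0) ∧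
      (G.edgeFinset.filter (fun e => c e ≠ 0)).card = 3) := by
  constructor
  · intro c hpar hne
    by_contra hlt
    push_neg at hlt
    set S := G.edgeFinset.filter (fun e => c e ≠ 0) with hSdef
    obtain ⟨e, heE, hce⟩ := hne
    have hfilter : ∀ v, G.edgeFinset.filter (fun e => v ∈ e ∧ c e ≠ 0)
        = S.filter (fun e => v ∈ e) := by
      intro v
      ext x
      simp only [hSdef, Finset.mem_filter]
      tauto
    induction e using Sym2.ind with
    | _ u v =>
      have hadj : G.Adj u v := (SimpleGraph.mem_edgeFinset.mp heE)
      have huv : u ≠ v := fun h => ((hG u v).mp hadj) (congrArg Prod.fst h)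
      have heS : s(u, v) ∈ S := Finset.mem_filter.mpr ⟨heE, hce⟩
      have key : ∀ w, w ∈ s(u, v) → ∃ e', e' ∈ S ∧ w ∈ e' ∧ e' ≠ s(u, v) := by
        intro w hw
        have h1 : s(u, v) ∈ S.filter (fun e => w ∈ e) :=
          Finset.mem_filter.mpr ⟨heS, hw⟩
        have h2 := hpar w
        rw [hfilter w] at h2
        have h0 : 0 < (S.filter (fun e => w ∈ e)).card :=
          Finset.card_pos.mpr ⟨_, h1⟩
        have h3 : 1 < (S.filter (fun e => w ∈ e)).card := by omega
        obtain ⟨e', he', hne'⟩ := Finset.exists_mem_ne h3 s(u, v)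
        exact ⟨e', (Finset.mem_filter.mp he').1, (Finset.mem_filter.mp he').2, hne'⟩
      obtain ⟨e1, he1S, hue1, he1ne⟩ := key u (Sym2.mem_mk_left u v)
      obtain ⟨e2, he2S, hve2, he2ne⟩ := key v (Sym2.mem_mk_right u v)
      have he12 : e1 = e2 := by
        by_contra hne12
        have hsub : ({s(u, v), e1, e2} : Finset (Sym2 (Fin 3 × Fin 3))) ⊆ S := by
          intro x hx
          simp only [Finset.mem_insert, Finset.mem_singleton] at hx
          rcases hx with h | h | h <;> subst h <;> assumption
        have hcard : ({s(u, v), e1, e2} : Finset (Sym2 (Fin 3 × Fin 3))).card = 3 := by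
          rw [Finset.card_insert_of_notMem, Finset.card_insert_of_notMem,
            Finset.card_singleton]
          · simp only [Finset.mem_singleton]; exact hne12
          · simp only [Finset.mem_insert, Finset.mem_singleton]
            push_neg
            exact ⟨Ne.symm he1ne, Ne.symm he2ne⟩
        have := Finset.card_le_card hsub
        omega
      subst he12
      have : e1 = s(u, v) := (Sym2.mem_and_mem_iff huv).mp ⟨hue1, hve2⟩
      exact he1ne this
  · set a : Fin 3 × Fin 3 := (0, 0)
    set b : Fin 3 × Fin 3 := (1, 0)
    set d : Fin 3 × Fin 3 := (2, 0)
    set T : Finset (Sym2 (Fin 3 × Fin 3)) := {s(a, b), s(a, d), s(b, d)} with hT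
    have hTE : ∀ e ∈ T, e ∈ G.edgeFinset := by
      intro e he
      simp only [hT, Finset.mem_insert, Finset.mem_singleton] at he
      rcases he with h | h | h <;> subst h <;>
        exact SimpleGraph.mem_edgeFinset.mpr ((hG _ _).mpr (by decide))
    refine ⟨fun e => if e ∈ T then 1 else 0, ?_, ?_, ?_⟩
    · intro e he
      simp only [ite_eq_right_iff]
      intro hmem
      exact absurd (hTE e hmem) he
    · intro v
      have : G.edgeFinset.filter (fun e => v ∈ e ∧ (if e ∈ T then (1 : ZMod 2) else 0) ≠ 0)
          = T.filter (fun e => v ∈ e) := by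
        ext e
        simp only [Finset.mem_filter]
        constructor
        · rintro ⟨_, hv, hc⟩
          by_cases h : e ∈ T
          · exact ⟨h, hv⟩
          · simp [h] at hc
        · rintro ⟨hTmem, hv⟩
          exact ⟨hTE e hTmem, hv, by simp [hTmem]⟩
      rw [this]
      clear this
      revert v
      decide
    · have : G.edgeFinset.filter (fun e => (if e ∈ T then (1 : ZMod 2) else 0) ≠ 0) = T := by
        ext e
        simp only [Finset.mem_filter]
        constructor
        · rintro ⟨_, hc⟩
          by_cases h : e ∈ T
          · exact h
          · simp [h] at hc
        · intro h
          exact ⟨hTE e h, by simp [h]⟩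
      rw [this, hT]
      decide
end

section
/- Let 𝒞 be the generalized graph code on K_{3,3,3} with the even-weight code of length 6 at every vertex. If c ∈ 𝒞 is a nonzero codeword, then wt(c) ≥ 3; moreover, the indicator function of the edges of any triangle with one vertex in each part is a codeword of weight exactly 3. -/
/-!
A nonzero codeword has an edge `s(a, b)` in its support. The support has even degree at `a`
and at `b`, so it contains a second edge at `a` and a second edge at `b`; these two differ,
since an edge through both `a` and `b` is `s(a, b)` itself. Hence the weight is at least 3.
The edges of a triangle meet every vertex in 0 or 2 edges, so they form a codeword of weight 3.
-/

open Finset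

section EvenDegree

variable {V : Type*} [Fintype V] [DecidableEq V] (G : SimpleGraph V) [DecidableRel G.Adj]

lemma SimpleGraph.exists_ne_mem_of_even_degree {c : Sym2 V → ZMod 2}
    (hc : ∀ v, (G.edgeFinset.filter (fun e => v ∈ e ∧ c e ≠ 0)).card % 2 = 0)
    {e : Sym2 V} (he : e ∈ G.edgeFinset.filter (fun e => c e ≠ 0)) {v : V} (hv : v ∈ e) :
    ∃ f ∈ G.edgeFinset.filter (fun e => c e ≠ 0), f ≠ e ∧ v ∈ f := by
  set S := G.edgeFinset.filter (fun e => v ∈ e ∧ c e ≠ 0)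
  have heS : e ∈ S := by
    rw [mem_filter] at he ⊢
    exact ⟨he.1, hv, he.2⟩
  have hS : 1 < S.card := by
    have hpos : 0 < S.card := card_pos.mpr ⟨e, heS⟩
    have heven : S.card % 2 = 0 := hc v
    omega
  obtain ⟨f, hfS, hfe⟩ := exists_mem_ne hS e
  simp only [S, mem_filter] at hfS ⊢
  exact ⟨f, ⟨hfS.1, hfS.2.2⟩, hfe, hfS.2.1⟩

theorem SimpleGraph.three_le_card_support_of_even_degree {c : Sym2 V → ZMod 2}
    (hc : ∀ v, (G.edgeFinset.filter (fun e => v ∈ e ∧ c e ≠ 0)).card % 2 = 0)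
    (hne : ∃ e ∈ G.edgeFinset, c e ≠ 0) :
    3 ≤ (G.edgeFinset.filter (fun e => c e ≠ 0)).card := by
  obtain ⟨e, heG, hce⟩ := hne
  induction e using Sym2.ind with
  | _ a b =>
  have hab : a ≠ b := G.ne_of_adj (G.mem_edgeFinset.mp heG)
  have he : s(a, b) ∈ G.edgeFinset.filter (fun e => c e ≠ 0) := mem_filter.mpr ⟨heG, hce⟩
  obtain ⟨f, hf, hfe, haf⟩ := G.exists_ne_mem_of_even_degree hc he (Sym2.mem_mk_left a b)
  obtain ⟨g, hg, hge, hbg⟩ := G.exists_ne_mem_of_even_degree hc he (Sym2.mem_mk_right a b)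
  have hfg : f ≠ g := by
    rintro rfl
    exact hfe ((Sym2.mem_and_mem_iff hab).mp ⟨haf, hbg⟩)
  calc 3 = ({s(a, b), f, g} : Finset (Sym2 V)).card := by
        rw [card_insert_of_notMem (by simp [hfe.symm, hge.symm]), card_pair hfg]
    _ ≤ _ := card_le_card (by simp [insert_subset_iff, he, hf, hg])

end EvenDegree

section Triangle

variable {V : Type*} [DecidableEq V] {a b c : V}

lemma card_triangle_edges (hab : a ≠ b) (hac : a ≠ c) (hbc : b ≠ c) :
    ({s(a, b), s(a, c), s(b, c)} : Finset (Sym2 V)).card = 3 := by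
  rw [card_insert_of_notMem, card_pair] <;> simp [hab, hac, hbc, hab.symm, hbc.symm]

lemma card_filter_mem_triangle_edges_mod_two (hab : a ≠ b) (hac : a ≠ c) (hbc : b ≠ c) (v : V) :
    (({s(a, b), s(a, c), s(b, c)} : Finset (Sym2 V)).filter (v ∈ ·)).card % 2 = 0 := by
  rw [filter_insert, filter_insert, filter_singleton]
  by_cases ha : v = a <;> by_cases hb : v = b <;> by_cases hc : v = c <;> subst_vars <;> simp_all

end Triangle

lemma filter_and_indicator_ne_zero {α : Type*} [DecidableEq α] {E T : Finset α}
    {c : α → ZMod 2} (hT : T ⊆ E) (hc : ∀ e, c e = if e ∈ T then 1 else 0)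
    (p : α → Prop) [DecidablePred p] :
    E.filter (fun e => p e ∧ c e ≠ 0) = T.filter p := by
  ext e
  by_cases he : e ∈ T
  · simp [hc, he, hT he, and_comm]
  · simp [hc, he]

/-- For the generalized graph code on `K_{3,3,3}` with the even-weight code of length
6 at every vertex: every nonzero codeword has weight at least 3, and the indicator
function of the edges of any triangle with one vertex in each part is a codeword of
weight exactly 3. -/
theorem stmt16 (G : SimpleGraph (Fin 3 × Fin 3)) [DecidableRel G.Adj]
    (hG : ∀ u v, G.Adj u v ↔ u.1 ≠ v.1) :
    (∀ c : Sym2 (Fin 3 × Fin 3) → ZMod 2,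
      (∀ v, (G.edgeFinset.filter (fun e => v ∈ e ∧ c e ≠ 0)).card % 2 = 0) →
      (∃ e ∈ G.edgeFinset, c e ≠ 0) →
      3 ≤ (G.edgeFinset.filter (fun e => c e ≠ 0)).card) ∧
    (∀ w : Fin 3 → Fin 3 × Fin 3, (∀ j, (w j).1 = j) →
      ∀ c : Sym2 (Fin 3 × Fin 3) → ZMod 2,
        (∀ e, c e = if e ∈ ({s(w 0, w 1), s(w 0, w 2), s(w 1, w 2)} :
            Finset (Sym2 (Fin 3 × Fin 3))) then 1 else 0) →
        (∀ v, (G.edgeFinset.filter (fun e => v ∈ e ∧ c e ≠ 0)).card % 2 = 0) ∧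
        (G.edgeFinset.filter (fun e => c e ≠ 0)).card = 3) := by
  refine ⟨fun c hc hne => G.three_le_card_support_of_even_degree hc hne, fun w hw c hc => ?_⟩
  have hadj : ∀ i j, i ≠ j → G.Adj (w i) (w j) := fun i j hij => by
    rwa [hG, hw, hw]
  have h01 := hadj 0 1 (by decide)
  have h02 := hadj 0 2 (by decide)
  have h12 := hadj 1 2 (by decide)
  have hT : ({s(w 0, w 1), s(w 0, w 2), s(w 1, w 2)} : Finset (Sym2 (Fin 3 × Fin 3)))
      ⊆ G.edgeFinset := by
    simp [insert_subset_iff, h01, h02, h12]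
  refine ⟨fun v => ?_, ?_⟩
  · rw [filter_and_indicator_ne_zero hT hc]
    exact card_filter_mem_triangle_edges_mod_two h01.ne h02.ne h12.ne v
  · have hsupp := filter_and_indicator_ne_zero hT hc (fun _ => True)
    simp only [true_and, filter_true] at hsupp
    rw [hsupp, card_triangle_edges h01.ne h02.ne h12.ne]
end

section
/- Let 𝒞 be the generalized graph code on the complete tripartite graph K_{7,7,7} with base code C = {(c₁, c₂) : c₁, c₂ ∈ H} ⊆ 𝔽₂¹⁴ at every vertex, where H is the [7,4,3] Hamming code and at each vertex the two length-7 blocks of c(v) are the symbols toward the two other parts. Then 𝒞 has length 147 and dimension 48. -/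
namespace Stmt17Aux

open Module Submodule Finset

variable (K : Type) [Field K]

/-- The "bidirectional" (tensor/product) code: matrices all of whose rows and columns lie in `H`. -/
def bidir (H : Submodule K (Fin 7 → K)) : Submodule K (Fin 7 → Fin 7 → K) where
  carrier := {M | (∀ i, M i ∈ H) ∧ ∀ j, (fun i => M i j) ∈ H}
  zero_mem' := ⟨fun _ => H.zero_mem, fun _ => H.zero_mem⟩
  add_mem' := fun ha hb => ⟨fun i => H.add_mem (ha.1 i) (hb.1 i),
    fun j => H.add_mem (ha.2 j) (hb.2 j)⟩
  smul_mem' := fun r _ ha => ⟨fun i => H.smul_mem r (ha.1 i),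
    fun j => H.smul_mem r (ha.2 j)⟩

/-- Outer product as a linear map in the first argument. -/
def outer (y : Fin 7 → K) : (Fin 7 → K) →ₗ[K] (Fin 7 → Fin 7 → K) where
  toFun x := fun i j => x i * y j
  map_add' x x' := by funext i j; simp [add_mul]
  map_smul' r x := by funext i j; simp [mul_assoc]

@[simp] theorem outer_apply (y x : Fin 7 → K) (i j : Fin 7) : outer K y x i j = x i * y j := rfl

theorem finrank_bidir (H : Submodule K (Fin 7 → K)) (hHk : finrank K H = 4) :
    finrank K (bidir K H) = 16 := by
  classical
  let b : Basis (Fin 4) K H := Module.finBasisOfFinrankEq K H hHk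
  set w : Fin 4 → (Fin 7 → K) := fun a => (b a : Fin 7 → K) with hw_def
  have hw : LinearIndependent K w :=
    b.linearIndependent.map' H.subtype (Submodule.ker_subtype H)
  have hwmem : ∀ a, w a ∈ H := fun a => (b a).2
  set u : Fin 4 × Fin 4 → (Fin 7 → Fin 7 → K) := fun p => outer K (w p.2) (w p.1) with hu_def
  have hu : LinearIndependent K u := by
    rw [Fintype.linearIndependent_iff]
    intro c hc p
    have h1 : ∀ i : Fin 7, ∑ q : Fin 4, (∑ a : Fin 4, c (a, q) * w a i) • w q = 0 := by
      intro i
      have := congrFun hc i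
      rw [Finset.sum_apply] at this
      calc ∑ q : Fin 4, (∑ a : Fin 4, c (a, q) * w a i) • w q
          = ∑ q : Fin 4, ∑ a : Fin 4, (c (a, q) * w a i) • w q := by
            simp [Finset.sum_smul]
        _ = ∑ a : Fin 4, ∑ q : Fin 4, (c (a, q) * w a i) • w q := Finset.sum_comm
        _ = ∑ p : Fin 4 × Fin 4, (c p * w p.1 i) • w p.2 := by
            rw [Fintype.sum_prod_type]
        _ = ∑ p : Fin 4 × Fin 4, (c p • u p) i := by
            refine Finset.sum_congr rfl fun p _ => ?_
            funext j
            simp [hu_def, smul_smul, mul_assoc]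
        _ = 0 := this
    have h2 : ∀ (i : Fin 7) (q : Fin 4), ∑ a : Fin 4, c (a, q) * w a i = 0 := fun i q =>
      Fintype.linearIndependent_iff.mp hw _ (h1 i) q
    have h3 : ∀ q : Fin 4, ∑ a : Fin 4, c (a, q) • w a = 0 := by
      intro q
      funext i
      rw [Finset.sum_apply]
      simpa using h2 i q
    have h4 := Fintype.linearIndependent_iff.mp hw _ (h3 p.2) p.1
    simpa using h4
  have hspanw : span K (Set.range w) = H := by
    have : Set.range w = H.subtype '' Set.range b := by
      rw [hw_def]; ext x; simp [Set.range_comp]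
    rw [this, ← Submodule.map_span, b.span_eq, Submodule.map_top, Submodule.range_subtype]
  have hspan : span K (Set.range u) = bidir K H := by
    apply le_antisymm
    · rw [span_le]
      rintro _ ⟨p, rfl⟩
      constructor
      · intro i
        have : u p i = (w p.1 i) • w p.2 := by funext j; simp [hu_def]
        rw [this]; exact H.smul_mem _ (hwmem p.2)
      · intro j
        have : (fun i => u p i j) = (w p.2 j) • w p.1 := by
          funext i; simp [hu_def, mul_comm]
        rw [this]; exact H.smul_mem _ (hwmem p.1)
    · rintro M ⟨hrow, hcol⟩
      set f : Fin 4 → Fin 7 → K := fun a i => b.repr ⟨M i, hrow i⟩ a with hf_def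
      have hf : ∀ a, f a ∈ H := by
        intro a
        obtain ⟨φ, hφ⟩ := LinearMap.exists_extend (b.coord a)
        have hfi : ∀ i, f a i = φ (M i) := by
          intro i
          have : φ (H.subtype ⟨M i, hrow i⟩) = b.coord a ⟨M i, hrow i⟩ := by
            rw [← LinearMap.comp_apply, hφ]
          simpa [hf_def, Basis.coord_apply] using this.symm
        have : f a = ∑ j : Fin 7, φ (fun t => if j = t then (1:K) else 0) • (fun i => M i j) := by
          funext i
          rw [Finset.sum_apply, hfi i]
          have hM : M i = ∑ j : Fin 7, (M i j) • (fun t => if j = t then (1:K) else 0) :=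
            pi_eq_sum_univ (M i)
          rw [hM, map_sum]
          refine Finset.sum_congr rfl fun j _ => ?_
          simp [mul_comm]
        rw [this]
        exact sum_mem fun j _ => H.smul_mem _ (hcol j)
      have hMsum : M = ∑ a : Fin 4, outer K (w a) (f a) := by
        funext i j
        have := congrArg (H.subtype) (b.sum_repr ⟨M i, hrow i⟩)
        rw [map_sum] at this
        have hMi : M i = ∑ a : Fin 4, f a i • w a := by
          rw [hf_def]
          simpa [hw_def] using this.symm
        rw [Finset.sum_apply, Finset.sum_apply]
        calc M i j = (∑ a : Fin 4, f a i • w a) j := by rw [← hMi]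
          _ = ∑ a : Fin 4, f a i * w a j := by rw [Finset.sum_apply]; simp
          _ = ∑ a : Fin 4, outer K (w a) (f a) i j := by simp
      rw [hMsum]
      refine sum_mem fun a _ => ?_
      have h1 : outer K (w a) (f a) ∈ Submodule.map (outer K (w a)) (span K (Set.range w)) :=
        Submodule.mem_map_of_mem (by rw [hspanw]; exact hf a)
      rw [Submodule.map_span] at h1
      refine Submodule.span_mono ?_ h1
      rintro _ ⟨_, ⟨cidx, rfl⟩, rfl⟩
      exact ⟨(cidx, a), rfl⟩
  rw [← hspan, finrank_span_eq_card hu]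
  simp


abbrev V := Fin 3 × Fin 7
abbrev K2 := ZMod 2
abbrev M7 := Fin 7 → Fin 7 → ZMod 2

def codeC (G : SimpleGraph V) [DecidableRel G.Adj] (H : Submodule K2 (Fin 7 → K2)) :
    Submodule K2 (Sym2 V → K2) where
  carrier := {c | (∀ e ∉ G.edgeFinset, c e = 0) ∧
      ∀ v : Fin 3 × Fin 7, ∀ j : Fin 3, j ≠ v.1 →
        (fun i : Fin 7 => c s(v, (j, i))) ∈ H}
  zero_mem' := ⟨fun _ _ => rfl, fun _ _ _ => H.zero_mem⟩
  add_mem' := fun ha hb => ⟨fun e he => by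
      simp only [Pi.add_apply, ha.1 e he, hb.1 e he, add_zero],
    fun v j hj => H.add_mem (ha.2 v j hj) (hb.2 v j hj)⟩
  smul_mem' := fun r c hc => ⟨fun e he => by
      simp only [Pi.smul_apply, hc.1 e he, smul_zero],
    fun v j hj => H.smul_mem r (hc.2 v j hj)⟩

theorem mem_codeC {G : SimpleGraph V} [DecidableRel G.Adj] {H : Submodule K2 (Fin 7 → K2)}
    {c : Sym2 V → K2} : c ∈ codeC G H ↔
      (∀ e ∉ G.edgeFinset, c e = 0) ∧
      ∀ v : Fin 3 × Fin 7, ∀ j : Fin 3, j ≠ v.1 →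
        (fun i : Fin 7 => c s(v, (j, i))) ∈ H := Iff.rfl

theorem mem_bidir {H : Submodule K2 (Fin 7 → K2)} {M : M7} :
    M ∈ bidir K2 H ↔ (∀ i, M i ∈ H) ∧ ∀ j, (fun i => M i j) ∈ H := Iff.rfl

def Fmap : (Sym2 V → K2) →ₗ[K2] (M7 × M7 × M7) where
  toFun c := (fun i j => c s((0,i),(1,j)), fun i j => c s((0,i),(2,j)),
    fun i j => c s((1,i),(2,j)))
  map_add' _ _ := rfl
  map_smul' _ _ := rfl

def blk (M₁ M₂ M₃ : M7) (a c : Fin 3) : M7 :=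
  if a = 0 then (if c = 1 then M₁ else if c = 2 then M₂ else 0)
  else if a = 1 then (if c = 0 then (fun x y => M₁ y x) else if c = 2 then M₃ else 0)
  else (if c = 0 then (fun x y => M₂ y x) else if c = 1 then (fun x y => M₃ y x) else 0)

theorem blk_symm (M₁ M₂ M₃ : M7) (a c : Fin 3) (x y : Fin 7) :
    blk M₁ M₂ M₃ a c x y = blk M₁ M₂ M₃ c a y x := by
  fin_cases a <;> fin_cases c <;> simp [blk]

def cfun (M₁ M₂ M₃ : M7) : Sym2 V → K2 :=
  Sym2.lift ⟨fun u v => blk M₁ M₂ M₃ u.1 v.1 u.2 v.2,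
    fun u v => blk_symm M₁ M₂ M₃ u.1 v.1 u.2 v.2⟩

@[simp] theorem cfun_apply (M₁ M₂ M₃ : M7) (u v : V) :
    cfun M₁ M₂ M₃ s(u, v) = blk M₁ M₂ M₃ u.1 v.1 u.2 v.2 := rfl

end Stmt17Aux

open Stmt17Aux


/-- The generalized graph code on `K_{7,7,7}` whose base code at every vertex is the
concatenation `{(c₁,c₂) : c₁, c₂ ∈ H}` of the `[7,4,3]` Hamming code `H` (i.e. the 7
symbols from each vertex toward each of the two other parts form a codeword of `H`)
has length 147 and dimension 48. -/
theorem stmt17 (G : SimpleGraph (Fin 3 × Fin 7)) [DecidableRel G.Adj]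
    (hG : ∀ u v, G.Adj u v ↔ u.1 ≠ v.1)
    (H : Submodule (ZMod 2) (Fin 7 → ZMod 2))
    (hHk : Module.finrank (ZMod 2) H = 4)
    (hHd : ∀ w ∈ H, w ≠ 0 → 3 ≤ hammingNorm w)
    (hHd' : ∃ w ∈ H, w ≠ 0 ∧ hammingNorm w = 3) :
    G.edgeFinset.card = 147 ∧
    ∃ 𝒞 : Submodule (ZMod 2) (Sym2 (Fin 3 × Fin 7) → ZMod 2),
      (𝒞 : Set (Sym2 (Fin 3 × Fin 7) → ZMod 2)) =
        {c | (∀ e ∉ G.edgeFinset, c e = 0) ∧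
             ∀ v : Fin 3 × Fin 7, ∀ j : Fin 3, j ≠ v.1 →
               (fun i : Fin 7 => c s(v, (j, i))) ∈ H} ∧
      Module.finrank (ZMod 2) 𝒞 = 48 := by
  have hG' : ∀ (u v : Fin 3 × Fin 7), s(u, v) ∈ G.edgeFinset ↔ u.1 ≠ v.1 := by
    intro u v
    rw [SimpleGraph.mem_edgeFinset, SimpleGraph.mem_edgeSet, hG]
  constructor
  · -- edge count
    have hdeg : ∀ v : Fin 3 × Fin 7, G.degree v = 14 := by
      intro v
      have h1 : G.neighborFinset v = Finset.univ.filter (fun u : Fin 3 × Fin 7 => ¬ v.1 = u.1) := by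
        ext u
        simp [SimpleGraph.mem_neighborFinset, hG v u]
      have h2 : ∀ a : Fin 3,
          (Finset.univ.filter (fun u : Fin 3 × Fin 7 => ¬ a = u.1)).card = 14 := by decide
      rw [SimpleGraph.degree, h1]
      exact h2 v.1
    have hsum := G.sum_degrees_eq_twice_card_edges
    rw [Finset.sum_congr rfl (fun v _ => hdeg v), Finset.sum_const] at hsum
    simp only [Finset.card_univ, Fintype.card_prod, Fintype.card_fin, smul_eq_mul] at hsum
    omega
  · refine ⟨codeC G H, rfl, ?_⟩
    -- the components of Fmap of a codeword lie in the bidirectional code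
    have hmem : ∀ c : codeC G H,
        (Fmap (c : Sym2 V → K2)).1 ∈ bidir K2 H ∧
        (Fmap (c : Sym2 V → K2)).2.1 ∈ bidir K2 H ∧
        (Fmap (c : Sym2 V → K2)).2.2 ∈ bidir K2 H := by
      intro c
      obtain ⟨h0, hvert⟩ := mem_codeC.mp c.2
      refine ⟨⟨fun i => hvert ((0:Fin 3), i) (1:Fin 3) (by decide : (1:Fin 3) ≠ (0:Fin 3)), fun j => ?_⟩,
        ⟨fun i => hvert ((0:Fin 3), i) (2:Fin 3) (by decide : (2:Fin 3) ≠ (0:Fin 3)), fun j => ?_⟩,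
        ⟨fun i => hvert ((1:Fin 3), i) (2:Fin 3) (by decide : (2:Fin 3) ≠ (1:Fin 3)), fun j => ?_⟩⟩
      · have h := hvert ((1:Fin 3), j) (0:Fin 3) (by decide : (0:Fin 3) ≠ (1:Fin 3))
        have e : (fun t : Fin 7 => (c : Sym2 V → K2) s(((1:Fin 3), j), ((0:Fin 3), t))) =
            fun i : Fin 7 => (c : Sym2 V → K2) s(((0:Fin 3), i), ((1:Fin 3), j)) :=
          funext fun t => congrArg _ Sym2.eq_swap
        rw [e] at h; exact h
      · have h := hvert ((2:Fin 3), j) (0:Fin 3) (by decide : (0:Fin 3) ≠ (2:Fin 3))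
        have e : (fun t : Fin 7 => (c : Sym2 V → K2) s(((2:Fin 3), j), ((0:Fin 3), t))) =
            fun i : Fin 7 => (c : Sym2 V → K2) s(((0:Fin 3), i), ((2:Fin 3), j)) :=
          funext fun t => congrArg _ Sym2.eq_swap
        rw [e] at h; exact h
      · have h := hvert ((2:Fin 3), j) (1:Fin 3) (by decide : (1:Fin 3) ≠ (2:Fin 3))
        have e : (fun t : Fin 7 => (c : Sym2 V → K2) s(((2:Fin 3), j), ((1:Fin 3), t))) =
            fun i : Fin 7 => (c : Sym2 V → K2) s(((1:Fin 3), i), ((2:Fin 3), j)) :=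
          funext fun t => congrArg _ Sym2.eq_swap
        rw [e] at h; exact h
    let Φ : codeC G H →ₗ[K2] (bidir K2 H × bidir K2 H × bidir K2 H) :=
      { toFun := fun c => (⟨(Fmap (c : Sym2 V → K2)).1, (hmem c).1⟩,
          ⟨(Fmap (c : Sym2 V → K2)).2.1, (hmem c).2.1⟩,
          ⟨(Fmap (c : Sym2 V → K2)).2.2, (hmem c).2.2⟩)
        map_add' := fun c d => rfl
        map_smul' := fun r c => rfl }
    have hinj : ∀ c : codeC G H, Φ c = 0 → c = 0 := by
      intro c hc
      have h1 : (Fmap (c : Sym2 V → K2)).1 = 0 := congrArg (fun t => (t.1 : M7)) hc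
      have h2 : (Fmap (c : Sym2 V → K2)).2.1 = 0 := congrArg (fun t => (t.2.1 : M7)) hc
      have h3 : (Fmap (c : Sym2 V → K2)).2.2 = 0 := congrArg (fun t => (t.2.2 : M7)) hc
      obtain ⟨h0, hvert⟩ := mem_codeC.mp c.2
      apply Subtype.ext
      funext e
      show (c : Sym2 V → K2) e = 0
      induction e using Sym2.ind with
      | _ u v =>
        obtain ⟨a, x⟩ := u
        obtain ⟨b, y⟩ := v
        by_cases hab : a = b
        · exact h0 _ (fun hmem' => ((hG' (a,x) (b,y)).mp hmem') hab)
        · have hswap : (c : Sym2 V → K2) s((a,x),(b,y)) = (c : Sym2 V → K2) s((b,y),(a,x)) :=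
            congrArg _ Sym2.eq_swap
          fin_cases a <;> fin_cases b <;> first
            | exact absurd rfl hab
            | exact congrFun (congrFun h1 x) y
            | exact congrFun (congrFun h2 x) y
            | exact congrFun (congrFun h3 x) y
            | exact hswap.trans (congrFun (congrFun h1 y) x)
            | exact hswap.trans (congrFun (congrFun h2 y) x)
            | exact hswap.trans (congrFun (congrFun h3 y) x)
    have hsurj : Function.Surjective Φ := by
      rintro ⟨⟨M₁, hM₁⟩, ⟨M₂, hM₂⟩, ⟨M₃, hM₃⟩⟩
      obtain ⟨hM₁r, hM₁c⟩ := mem_bidir.mp hM₁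
      obtain ⟨hM₂r, hM₂c⟩ := mem_bidir.mp hM₂
      obtain ⟨hM₃r, hM₃c⟩ := mem_bidir.mp hM₃
      have hcmem : cfun M₁ M₂ M₃ ∈ codeC G H := by
        rw [mem_codeC]
        constructor
        · intro e
          induction e using Sym2.ind with
          | _ u v =>
            intro he
            obtain ⟨a, x⟩ := u
            obtain ⟨b, y⟩ := v
            have hab : a = b := by
              by_contra hne
              exact he ((hG' (a,x) (b,y)).mpr hne)
            subst hab
            show blk M₁ M₂ M₃ a a x y = 0
            fin_cases a <;> simp [blk]
        · rintro ⟨a, x⟩ j hj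
          show (fun i => blk M₁ M₂ M₃ a j x i) ∈ H
          fin_cases a <;> fin_cases j <;> first
            | exact absurd rfl hj
            | exact hM₁r x
            | exact hM₂r x
            | exact hM₃r x
            | exact hM₁c x
            | exact hM₂c x
            | exact hM₃c x
      exact ⟨⟨cfun M₁ M₂ M₃, hcmem⟩, rfl⟩
    have hinj' : Function.Injective Φ :=
      LinearMap.ker_eq_bot.mp (LinearMap.ker_eq_bot'.mpr hinj)
    let eΦ : (codeC G H) ≃ₗ[K2] (bidir K2 H × bidir K2 H × bidir K2 H) :=
      LinearEquiv.ofBijective Φ ⟨hinj', hsurj⟩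
    rw [eΦ.finrank_eq, Module.finrank_prod, Module.finrank_prod,
      finrank_bidir K2 H hHk]
end

section
/- Let 𝒞 be the generalized graph code on K_{7,7,7} with H ⊗ H-type structure as above (each vertex's symbols toward each other part form a Hamming codeword). Then the minimum distance of 𝒞 is 9; in particular, if x, y ∈ 𝔽₂⁷ are minimum-weight Hamming codewords (weight 3), the edge-labeling assigning xᵢyⱼ to the edge between the i-th vertex of V₁ and the j-th vertex of V₂ and 0 to all other edges is a codeword of weight 9. -/
private lemma sym2_inj18 {a b : Fin 3} (hab : a ≠ b) :
    Function.Injective (fun p : Fin 7 × Fin 7 => s(((a, p.1) : Fin 3 × Fin 7), (b, p.2))) := by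
  intro p q h
  simp only [Sym2.eq, Sym2.rel_iff', Prod.mk.injEq, Prod.swap_prod_mk] at h
  rcases h with ⟨⟨_,h1⟩,⟨_,h2⟩⟩ | ⟨⟨h1,_⟩,_⟩
  · exact Prod.ext h1 h2
  · exact absurd h1 hab

/-- The generalized graph code on `K_{7,7,7}` with the `[7,4,3]` Hamming code `H`
toward each part has minimum distance 9: every nonzero codeword has weight at least
9, and for minimum-weight `x, y ∈ H` (weight 3) the labeling assigning `xᵢyⱼ` to the
edge between the `i`-th vertex of `V₁` and the `j`-th vertex of `V₂` and `0` to all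
other edges is a codeword of weight exactly 9. -/
theorem stmt18 (G : SimpleGraph (Fin 3 × Fin 7)) [DecidableRel G.Adj]
    (hG : ∀ u v, G.Adj u v ↔ u.1 ≠ v.1)
    (H : Submodule (ZMod 2) (Fin 7 → ZMod 2))
    (hHk : Module.finrank (ZMod 2) H = 4)
    (hHd : ∀ w ∈ H, w ≠ 0 → 3 ≤ hammingNorm w)
    (hHd' : ∃ w ∈ H, w ≠ 0 ∧ hammingNorm w = 3) :
    (∀ c : Sym2 (Fin 3 × Fin 7) → ZMod 2,
      (∀ e ∉ G.edgeFinset, c e = 0) →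
      (∀ v : Fin 3 × Fin 7, ∀ j : Fin 3, j ≠ v.1 →
        (fun i : Fin 7 => c s(v, (j, i))) ∈ H) →
      (∃ e ∈ G.edgeFinset, c e ≠ 0) →
      9 ≤ (G.edgeFinset.filter (fun e => c e ≠ 0)).card) ∧
    (∀ x ∈ H, ∀ y ∈ H, hammingNorm x = 3 → hammingNorm y = 3 →
      ∀ c : Sym2 (Fin 3 × Fin 7) → ZMod 2,
        (∀ i j : Fin 7, c s(((0 : Fin 3), i), ((1 : Fin 3), j)) = x i * y j) →
        (∀ e : Sym2 (Fin 3 × Fin 7),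
          (∀ i j : Fin 7, e ≠ s(((0 : Fin 3), i), ((1 : Fin 3), j))) → c e = 0) →
        (∀ e ∉ G.edgeFinset, c e = 0) ∧
        (∀ v : Fin 3 × Fin 7, ∀ j : Fin 3, j ≠ v.1 →
          (fun i : Fin 7 => c s(v, (j, i))) ∈ H) ∧
        (G.edgeFinset.filter (fun e => c e ≠ 0)).card = 9) := by
  constructor
  · -- minimum distance lower bound
    intro c _ hrow hne
    obtain ⟨e, he, hce⟩ := hne
    induction e using Sym2.ind with
    | _ u v =>
    have hadj : G.Adj u v := SimpleGraph.mem_edgeFinset.mp he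
    have hab : u.1 ≠ v.1 := (hG u v).mp hadj
    set S : Finset (Fin 7) := Finset.univ.filter (fun k => c s(v, (u.1, k)) ≠ 0) with hS
    have hScard : 3 ≤ S.card := by
      have hmem : (fun i : Fin 7 => c s(v, (u.1, i))) ∈ H := hrow v u.1 hab
      have hnz : (fun i : Fin 7 => c s(v, (u.1, i))) ≠ 0 := by
        intro h0
        apply hce
        have h1 : c s(v, (u.1, u.2)) = 0 := congrFun h0 u.2
        rwa [show ((u.1, u.2) : Fin 3 × Fin 7) = u from rfl, Sym2.eq_swap] at h1
      exact hHd _ hmem hnz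
    set R : Fin 7 → Finset (Fin 7) :=
      fun k => Finset.univ.filter (fun j => c s(((u.1, k) : Fin 3 × Fin 7), (v.1, j)) ≠ 0) with hR
    have hRcard : ∀ k ∈ S, 3 ≤ (R k).card := by
      intro k hk
      have hmem : (fun j : Fin 7 => c s(((u.1, k) : Fin 3 × Fin 7), (v.1, j))) ∈ H :=
        hrow (u.1, k) v.1 (Ne.symm hab)
      have hnz : (fun j : Fin 7 => c s(((u.1, k) : Fin 3 × Fin 7), (v.1, j))) ≠ 0 := by
        intro h0
        have h1 : c s(((u.1, k) : Fin 3 × Fin 7), (v.1, v.2)) = 0 := congrFun h0 v.2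
        rw [show ((v.1, v.2) : Fin 3 × Fin 7) = v from rfl, Sym2.eq_swap] at h1
        exact (Finset.mem_filter.mp hk).2 h1
      exact hHd _ hmem hnz
    set T : Finset (Fin 7 × Fin 7) :=
      (Finset.univ ×ˢ Finset.univ).filter
        (fun p => c s(((u.1, p.1) : Fin 3 × Fin 7), (v.1, p.2)) ≠ 0) with hT
    have hTcard : 9 ≤ T.card := by
      have hsub : S.biUnion (fun k => (R k).image (fun j => (k, j))) ⊆ T := by
        intro p hp
        obtain ⟨k, hk, hp⟩ := Finset.mem_biUnion.mp hp
        obtain ⟨j, hj, rfl⟩ := Finset.mem_image.mp hp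
        exact Finset.mem_filter.mpr
          ⟨Finset.mem_product.mpr ⟨Finset.mem_univ _, Finset.mem_univ _⟩,
            (Finset.mem_filter.mp hj).2⟩
      refine le_trans ?_ (Finset.card_le_card hsub)
      rw [Finset.card_biUnion]
      · calc (9 : ℕ) = 3 * 3 := rfl
          _ ≤ S.card * 3 := Nat.mul_le_mul_right 3 hScard
          _ = ∑ _k ∈ S, 3 := by rw [Finset.sum_const, smul_eq_mul]
          _ ≤ ∑ k ∈ S, ((R k).image (fun j => (k, j))).card := by
              refine Finset.sum_le_sum fun k hk => ?_
              rw [Finset.card_image_of_injective _ (fun a b h => (Prod.mk.injEq _ _ _ _ ▸ h).2)]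
              exact hRcard k hk
      · intro a _ b _ hab'
        simp only [Finset.disjoint_left]
        intro p hp hp'
        obtain ⟨_, _, rfl⟩ := Finset.mem_image.mp hp
        obtain ⟨_, _, h⟩ := Finset.mem_image.mp hp'
        exact hab' ((Prod.mk.injEq _ _ _ _ ▸ h.symm).1)
    refine le_trans hTcard ?_
    have himg : T.image (fun p : Fin 7 × Fin 7 => s(((u.1, p.1) : Fin 3 × Fin 7), (v.1, p.2)))
        ⊆ G.edgeFinset.filter (fun e => c e ≠ 0) := by
      intro e he'
      obtain ⟨p, hp, rfl⟩ := Finset.mem_image.mp he'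
      refine Finset.mem_filter.mpr ⟨?_, (Finset.mem_filter.mp hp).2⟩
      rw [SimpleGraph.mem_edgeFinset, SimpleGraph.mem_edgeSet]
      exact (hG _ _).mpr hab
    refine le_trans ?_ (Finset.card_le_card himg)
    rw [Finset.card_image_of_injective _ (sym2_inj18 hab)]
  · -- the explicit weight-9 codeword
    intro x hx y hy hnx hny c hc1 hc2
    refine ⟨?_, ?_, ?_⟩
    · intro e he
      induction e using Sym2.ind with
      | _ p q =>
      have hpq : p.1 = q.1 := by
        by_contra h
        exact he (SimpleGraph.mem_edgeFinset.mpr ((hG p q).mpr h))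
      refine hc2 _ fun i j h => ?_
      rw [Sym2.eq_iff] at h
      rcases h with ⟨h1, h2⟩ | ⟨h1, h2⟩ <;>
        rw [congrArg Prod.fst h1, congrArg Prod.fst h2] at hpq <;> simp at hpq
    · rintro ⟨a, k⟩ j hj
      simp only at hj ⊢
      have notform : ∀ (b : Fin 3), (a = 0 ∧ b = 1 → False) → (a = 1 ∧ b = 0 → False) →
          (fun i : Fin 7 => c s(((a, k) : Fin 3 × Fin 7), (b, i))) ∈ H := by
        intro b h01 h10
        have hz : (fun i : Fin 7 => c s(((a, k) : Fin 3 × Fin 7), (b, i))) = 0 := by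
          funext i
          refine hc2 _ fun i' j' h => ?_
          rw [Sym2.eq_iff] at h
          rcases h with ⟨h1, h2⟩ | ⟨h1, h2⟩
          · exact h01 ⟨congrArg Prod.fst h1, congrArg Prod.fst h2⟩
          · exact h10 ⟨congrArg Prod.fst h1, congrArg Prod.fst h2⟩
        rw [hz]; exact H.zero_mem
      by_cases ha0 : a = 0
      · by_cases hj1 : j = 1
        · subst ha0; subst hj1
          have hz : (fun i : Fin 7 => c s(((0, k) : Fin 3 × Fin 7), ((1 : Fin 3), i)))
              = x k • y := by
            funext i
            simp only [Pi.smul_apply, smul_eq_mul]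
            exact hc1 k i
          rw [hz]; exact H.smul_mem _ hy
        · exact notform j (fun h => hj1 h.2)
            (fun h => by rw [ha0] at h; exact absurd h.1 (by decide))
      · by_cases ha1 : a = 1
        · by_cases hj0 : j = 0
          · subst ha1; subst hj0
            have hz : (fun i : Fin 7 => c s(((1, k) : Fin 3 × Fin 7), ((0 : Fin 3), i)))
                = y k • x := by
              funext i
              simp only [Pi.smul_apply, smul_eq_mul]
              rw [Sym2.eq_swap, hc1 i k, mul_comm]
            rw [hz]; exact H.smul_mem _ hx
          · exact notform j (fun h => ha0 h.1) (fun h => hj0 h.2)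
        · exact notform j (fun h => ha0 h.1) (fun h => ha1 h.1)
    · have hset : G.edgeFinset.filter (fun e => c e ≠ 0) =
          ((Finset.univ.filter (fun i => x i ≠ 0)) ×ˢ
            (Finset.univ.filter (fun j => y j ≠ 0))).image
            (fun p : Fin 7 × Fin 7 => s(((0 : Fin 3), p.1), ((1 : Fin 3), p.2))) := by
        ext e
        simp only [Finset.mem_filter, Finset.mem_image, Finset.mem_product, Finset.mem_univ,
          true_and]
        constructor
        · rintro ⟨_, hce⟩
          by_cases h : ∀ i j : Fin 7, e ≠ s(((0 : Fin 3), i), ((1 : Fin 3), j))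
          · exact absurd (hc2 e h) hce
          · push_neg at h
            obtain ⟨i, j, rfl⟩ := h
            rw [hc1 i j] at hce
            exact ⟨(i, j), ⟨left_ne_zero_of_mul hce, right_ne_zero_of_mul hce⟩, rfl⟩
        · rintro ⟨⟨i, j⟩, ⟨hxi, hyj⟩, rfl⟩
          refine ⟨SimpleGraph.mem_edgeFinset.mpr
            ((hG _ _).mpr (show (0 : Fin 3) ≠ 1 by decide)), ?_⟩
          rw [hc1 i j]
          exact mul_ne_zero hxi hyj
      rw [hset, Finset.card_image_of_injective _ (sym2_inj18 (by decide)),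
        Finset.card_product]
      have e1 : (Finset.univ.filter (fun i => x i ≠ 0)).card = 3 := hnx
      have e2 : (Finset.univ.filter (fun j => y j ≠ 0)).card = 3 := hny
      rw [e1, e2]
end
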